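/- In an add-MARA instance with exactly 2 agents, if no envy-free allocation exists, then the instance is a unanimous envy instance, i.e., no (K-app envy)-free allocation exists for any K. -/

import Mathlib

/-!
With two agents, 1-app envy is ordinary envy, while 2-app envy of `i` towards `j` means that
both agents strictly prefer `j`'s bundle. So if an allocation is (2-app envy)-free but not
envy-free, one agent strictly prefers the other bundle and the other agent weakly does;
exchanging the two bundles then gives an envy-free allocation.
-/

open Finset

/-- Utility that agent `i` assigns to the bundle held by agent `k` under
allocation `π` (an allocation maps each object to the agent receiving it). -/
def bundleUtil {n m : ℕ} (u : Fin n → Fin m → ℚ) (π : Fin m → Fin n)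
    (i k : Fin n) : ℚ :=
  ∑ o ∈ Finset.univ.filter (fun o => π o = k), u i o

/-- Agent `i` `K`-app envies agent `j` in `π`: there is a set of `K` agents
including `i`, each of whom values `j`'s bundle strictly more than `i`'s. -/
def KAppEnvies {n m : ℕ} (u : Fin n → Fin m → ℚ) (π : Fin m → Fin n)
    (K : ℕ) (i j : Fin n) : Prop :=
  ∃ S : Finset (Fin n), S.card = K ∧ i ∈ S ∧
    ∀ k ∈ S, bundleUtil u π k i < bundleUtil u π k j

/-- An allocation is (`K`-app envy)-free if no agent `K`-app envies another. -/
def KAppEnvyFree {n m : ℕ} (u : Fin n → Fin m → ℚ) (π : Fin m → Fin n)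
    (K : ℕ) : Prop :=
  ∀ i j : Fin n, i ≠ j → ¬ KAppEnvies u π K i j

def IsEnvyFree {n m : ℕ} (u : Fin n → Fin m → ℚ) (π : Fin m → Fin n) : Prop :=
  ∀ i j : Fin n, bundleUtil u π i j ≤ bundleUtil u π i i

section

variable {n m : ℕ} (u : Fin n → Fin m → ℚ) (π : Fin m → Fin n)

theorem bundleUtil_perm_comp (e : Equiv.Perm (Fin n)) (i k : Fin n) :
    bundleUtil u (e ∘ π) i k = bundleUtil u π i (e.symm k) := by
  unfold bundleUtil
  congr 1
  ext o
  simp only [mem_filter, mem_univ, true_and, Function.comp_apply,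
    ← Equiv.eq_symm_apply]

theorem kAppEnvies_one_iff (i j : Fin n) :
    KAppEnvies u π 1 i j ↔ bundleUtil u π i i < bundleUtil u π i j := by
  constructor
  · rintro ⟨S, -, hiS, hS⟩
    exact hS i hiS
  · intro h
    refine ⟨{i}, card_singleton i, mem_singleton_self i, fun k hk => ?_⟩
    rwa [mem_singleton.1 hk]

theorem kAppEnvyFree_one_iff : KAppEnvyFree u π 1 ↔ IsEnvyFree u π := by
  simp only [KAppEnvyFree, IsEnvyFree, kAppEnvies_one_iff, not_lt]
  refine ⟨fun h i j => ?_, fun h i j _ => h i j⟩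
  rcases eq_or_ne i j with rfl | hij
  · exact le_rfl
  · exact h i j hij

theorem kAppEnvies_card_iff (i j : Fin n) :
    KAppEnvies u π n i j ↔ ∀ k, bundleUtil u π k i < bundleUtil u π k j := by
  constructor
  · rintro ⟨S, hS, -, hlt⟩ k
    rw [eq_univ_of_card S (by simpa using hS)] at hlt
    exact hlt k (mem_univ k)
  · intro h
    exact ⟨univ, card_fin n, mem_univ i, fun k _ => h k⟩

end

section TwoAgents

variable {m : ℕ} {u : Fin 2 → Fin m → ℚ} {π : Fin m → Fin 2}

theorem Fin.two_eq_or_eq_rev (k i : Fin 2) : k = i ∨ k = i.rev := by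
  revert k i
  decide

theorem isEnvyFree_revPerm_comp (h : ∀ i, bundleUtil u π i i ≤ bundleUtil u π i i.rev) :
    IsEnvyFree u (Fin.revPerm ∘ π) := by
  intro a b
  simp only [bundleUtil_perm_comp, Fin.revPerm_symm, Fin.revPerm_apply]
  rcases Fin.two_eq_or_eq_rev b a with rfl | rfl
  · exact le_rfl
  · simpa only [Fin.rev_rev] using h a

theorem exists_isEnvyFree_of_kAppEnvyFree_two (hπ : KAppEnvyFree u π 2) :
    ∃ π' : Fin m → Fin 2, IsEnvyFree u π' := by
  by_cases hEF : IsEnvyFree u π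
  · exact ⟨π, hEF⟩
  simp only [IsEnvyFree, not_forall, not_le] at hEF
  obtain ⟨i, j, hij⟩ := hEF
  have hne : i ≠ j := by
    rintro rfl
    exact hij.false
  obtain rfl : j = i.rev := (Fin.two_eq_or_eq_rev j i).resolve_left hne.symm
  have hrev : bundleUtil u π i.rev i.rev ≤ bundleUtil u π i.rev i := by
    by_contra! hlt
    refine hπ i i.rev hne ((kAppEnvies_card_iff u π i i.rev).2 fun k => ?_)
    rcases Fin.two_eq_or_eq_rev k i with rfl | rfl
    · exact hij
    · exact hlt
  refine ⟨Fin.revPerm ∘ π, isEnvyFree_revPerm_comp fun k => ?_⟩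
  rcases Fin.two_eq_or_eq_rev k i with rfl | rfl
  · exact hij.le
  · rwa [Fin.rev_rev]

end TwoAgents

theorem two_agents_ef_or_unanimous {m : ℕ} (u : Fin 2 → Fin m → ℚ)
    (hnoEF : ¬ ∃ π : Fin m → Fin 2, ∀ i j : Fin 2,
      bundleUtil u π i j ≤ bundleUtil u π i i) :
    ∀ K : ℕ, 1 ≤ K → K ≤ 2 →
      ¬ ∃ π : Fin m → Fin 2, KAppEnvyFree u π K := by
  rintro K hK1 hK2 ⟨π, hπ⟩
  interval_cases K
  · exact hnoEF ⟨π, (kAppEnvyFree_one_iff u π).1 hπ⟩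
  · exact hnoEF (exists_isEnvyFree_of_kAppEnvyFree_two hπ)
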